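/- Let Ω = Ω₁ × Ω₂ with dim Ω₂ = j = 2 and let b > 1 be a real number. Then there exists a constant A_j such that for every u ∈ H¹₀(Ω) radially symmetric in the second variable and every x = (x₁, x₂) ∈ Ω, |u(x)|^b ≤ (b·A_j / ‖x₂‖^{j−1}) ∫_{Ω₂} |u(x₁, y)|^{b−1} |∇u(x₁, y)| dy. -/

import Mathlib

/-!
Fix `x₁` and a unit vector `e`, and let `g(s) = u(x₁, s e)`. As `g(R) = 0`, the fundamental
theorem of calculus applied to `|g|^b`, whose derivative has absolute value
`b |g|^(b-1) |g'|`, gives `|g(r)|^b ≤ b ∫_r^R |g|^(b-1) |∇u|`. On `[r, R]` the weight `s / r`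
is at least `1`, so this is at most `(b / r) ∫_0^R s |g|^(b-1) |∇u| ds`, and in polar
coordinates that integral is the integral over `Ω₂` divided by `2 |B₁|`. Polar coordinates
apply because `|∇u(x₁, ·)|` is radial, like `u(x₁, ·)`.
-/

open MeasureTheory Metric Bornology

noncomputable section

abbrev E (n : ℕ) : Type := EuclideanSpace ℝ (Fin n)

open Set

def LinearIsometryEquiv.prodCongr {R E₁ E₂ F₁ F₂ : Type*} [Semiring R]
    [SeminormedAddCommGroup E₁] [SeminormedAddCommGroup E₂] [SeminormedAddCommGroup F₁]
    [SeminormedAddCommGroup F₂] [Module R E₁] [Module R E₂] [Module R F₁] [Module R F₂]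
    (e : E₁ ≃ₗᵢ[R] E₂) (f : F₁ ≃ₗᵢ[R] F₂) : (E₁ × F₁) ≃ₗᵢ[R] (E₂ × F₂) where
  toLinearEquiv := e.toLinearEquiv.prodCongr f.toLinearEquiv
  norm_map' p := by simp [Prod.norm_def]

/-- Reflecting the second variable across the hyperplane orthogonal to `v - w` leaves `u`
invariant and maps `(x, v)` to `(x, w)`, so the two derivatives differ by an isometry. -/
theorem norm_fderiv_eq_of_norm_eq {F G H : Type*} [NormedAddCommGroup F] [NormedSpace ℝ F]
    [NormedAddCommGroup G] [InnerProductSpace ℝ G] [NormedAddCommGroup H] [NormedSpace ℝ H]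
    {u : F × G → H}
    (hrad : ∀ (x : F) (y z : G), ‖y‖ = ‖z‖ → u (x, y) = u (x, z))
    (x : F) {v w : G} (hvw : ‖v‖ = ‖w‖) :
    ‖fderiv ℝ u (x, v)‖ = ‖fderiv ℝ u (x, w)‖ := by
  set T := (LinearIsometryEquiv.refl ℝ F).prodCongr (Submodule.reflection (ℝ ∙ (v - w))ᗮ)
  have hTv : T (x, v) = (x, w) := Prod.ext rfl (Submodule.reflection_sub hvw)
  have hinv : u ∘ T = u := funext fun p =>
    hrad p.1 _ p.2 ((Submodule.reflection (ℝ ∙ (v - w))ᗮ).norm_map p.2)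
  have hcomp := T.toContinuousLinearEquiv.comp_right_fderiv (f := u) (x := (x, v))
  rw [LinearIsometryEquiv.coe_toContinuousLinearEquiv, hinv, hTv] at hcomp
  rw [hcomp]
  exact ContinuousLinearMap.opNorm_comp_linearIsometryEquiv _ T

theorem abs_deriv_comp_smul_le {F G : Type*} [NormedAddCommGroup F] [NormedSpace ℝ F]
    [NormedAddCommGroup G] [NormedSpace ℝ G] {u : F × G → ℝ} (hu : Differentiable ℝ u)
    (x : F) {e : G} (he : ‖e‖ ≤ 1) (s : ℝ) :
    |deriv (fun t : ℝ => u (x, t • e)) s| ≤ ‖fderiv ℝ u (x, s • e)‖ := by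
  have hline : HasDerivAt (fun t : ℝ => (x, t • e)) ((0 : F), e) s :=
    (hasDerivAt_const s x).prodMk (by simpa using (hasDerivAt_id s).smul_const e)
  change |deriv (u ∘ fun t : ℝ => (x, t • e)) s| ≤ _
  rw [((hu _).hasFDerivAt.comp_hasDerivAt s hline).deriv, ← Real.norm_eq_abs]
  calc ‖fderiv ℝ u (x, s • e) ((0 : F), e)‖ ≤ ‖fderiv ℝ u (x, s • e)‖ * ‖((0 : F), e)‖ :=
        ContinuousLinearMap.le_opNorm _ _
    _ ≤ ‖fderiv ℝ u (x, s • e)‖ :=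
        mul_le_of_le_one_right (norm_nonneg _) (by simpa [Prod.norm_def] using he)

theorem abs_mul_abs_rpow_sub_two_mul {b : ℝ} (hb : 1 < b) (t : ℝ) :
    |b * |t| ^ (b - 2) * t| = b * |t| ^ (b - 1) := by
  rcases eq_or_ne t 0 with rfl | ht
  · simp [Real.zero_rpow (show b - 1 ≠ 0 by linarith)]
  · rw [abs_mul, abs_mul, abs_of_pos (by linarith : 0 < b),
      abs_of_nonneg (Real.rpow_nonneg (abs_nonneg t) _), mul_assoc,
      ← Real.rpow_add_one (abs_ne_zero.2 ht), show b - 2 + 1 = b - 1 by ring]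

theorem abs_rpow_le_integral_of_abs_deriv_le {b r R : ℝ} (hb : 1 < b) {g h : ℝ → ℝ}
    (hg : ContDiff ℝ 1 g) (hh : Continuous h) (hgh : ∀ s, |deriv g s| ≤ h s)
    (hrR : r ≤ R) (hgR : g R = 0) :
    |g r| ^ b ≤ b * ∫ s in r..R, |g s| ^ (b - 1) * h s := by
  set φ' : ℝ → ℝ := fun s => b * |g s| ^ (b - 2) * g s * deriv g s
  have hφ : ∀ s, HasDerivAt (fun s => |g s| ^ b) (φ' s) s := fun s =>
    (hasDerivAt_abs_rpow (g s) hb).comp s ((hg.differentiable one_ne_zero) s).hasDerivAt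
  have hφ'cont : Continuous φ' := by
    have hφc : ContDiff ℝ 1 fun s => |g s| ^ b := by
      simpa only [Real.norm_eq_abs, Function.comp_def] using
        (contDiff_norm_rpow (E := ℝ) hb).comp hg
    convert hφc.continuous_deriv le_rfl using 1
    exact funext fun s => (hφ s).deriv.symm
  have hFTC := intervalIntegral.integral_eq_sub_of_hasDerivAt (fun s _ => hφ s)
    (hφ'cont.intervalIntegrable r R)
  have hcont : Continuous fun s => |g s| ^ (b - 1) * h s :=
    (hg.continuous.abs.rpow_const fun _ => Or.inr (by linarith)).mul hh
  calc |g r| ^ b = -∫ s in r..R, φ' s := by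
        rw [hFTC, hgR, abs_zero, Real.zero_rpow (by linarith)]; ring
    _ ≤ ∫ s in r..R, |φ' s| :=
        (neg_le_abs _).trans (intervalIntegral.abs_integral_le_integral_abs hrR)
    _ ≤ ∫ s in r..R, b * (|g s| ^ (b - 1) * h s) := by
        refine intervalIntegral.integral_mono_on hrR (hφ'cont.abs.intervalIntegrable r R)
          ((continuous_const.mul hcont).intervalIntegrable r R) fun s _ => ?_
        rw [abs_mul, abs_mul_abs_rpow_sub_two_mul hb, mul_assoc]
        gcongr
        exact hgh s
    _ = b * ∫ s in r..R, |g s| ^ (b - 1) * h s := intervalIntegral.integral_const_mul _ _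

theorem intervalIntegral_le_intervalIntegral_pow_mul_div {f : ℝ → ℝ} (hf : Continuous f)
    (hf0 : ∀ s, 0 ≤ f s) {r R : ℝ} (hr : 0 < r) (hrR : r ≤ R) (k : ℕ) :
    ∫ s in r..R, f s ≤ (∫ s in 0..R, s ^ k * f s) / r ^ k := by
  rw [le_div_iff₀ (by positivity), ← intervalIntegral.integral_mul_const]
  calc ∫ s in r..R, f s * r ^ k ≤ ∫ s in r..R, s ^ k * f s := by
        refine intervalIntegral.integral_mono_on hrR ((hf.mul continuous_const).intervalIntegrable
          r R) (((continuous_pow k).mul hf).intervalIntegrable r R) fun s hs => ?_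
        rw [mul_comm]
        gcongr
        · exact hf0 s
        · exact hs.1
    _ ≤ ∫ s in 0..R, s ^ k * f s :=
        intervalIntegral.integral_mono_interval hr.le hrR le_rfl
          ((ae_restrict_iff' measurableSet_Ioc).2 (ae_of_all _ fun s hs =>
            mul_nonneg (pow_nonneg hs.1.le k) (hf0 s)))
          (((continuous_pow k).mul hf).intervalIntegrable 0 R)

theorem abs_rpow_le_mul_intervalIntegral_div {b r R : ℝ} (hb : 1 < b) {g h : ℝ → ℝ}
    (hg : ContDiff ℝ 1 g) (hh : Continuous h) (hgh : ∀ s, |deriv g s| ≤ h s) (hr : 0 < r)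
    (hrR : r ≤ R) (hgR : g R = 0) :
    |g r| ^ b ≤ b * ((∫ s in 0..R, s * (|g s| ^ (b - 1) * h s)) / r) := by
  calc |g r| ^ b ≤ b * ∫ s in r..R, |g s| ^ (b - 1) * h s :=
        abs_rpow_le_integral_of_abs_deriv_le hb hg hh hgh hrR hgR
    _ ≤ b * ((∫ s in 0..R, s ^ 1 * (|g s| ^ (b - 1) * h s)) / r ^ 1) := by
        gcongr
        exact intervalIntegral_le_intervalIntegral_pow_mul_div
          ((hg.continuous.abs.rpow_const fun _ => Or.inr (by linarith)).mul hh)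
          (fun s => mul_nonneg (by positivity) ((abs_nonneg _).trans (hgh s))) hr hrR 1
    _ = b * ((∫ s in 0..R, s * (|g s| ^ (b - 1) * h s)) / r) := by simp only [pow_one]

theorem setIntegral_ball_fun_norm_eq {V : Type*} [NormedAddCommGroup V] [NormedSpace ℝ V]
    [Nontrivial V] [FiniteDimensional ℝ V] [MeasurableSpace V] [BorelSpace V] (μ : Measure V)
    [μ.IsAddHaarMeasure] (f : ℝ → ℝ) {R : ℝ} (hR : 0 ≤ R) :
    ∫ y in ball (0 : V) R, f ‖y‖ ∂μ =
      Module.finrank ℝ V * μ.real (ball 0 1) *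
        ∫ s in 0..R, s ^ (Module.finrank ℝ V - 1) * f s := by
  have hball :
      (ball (0 : V) R).indicator (fun y => f ‖y‖) = fun y => (Iio R).indicator f ‖y‖ := by
    ext y
    simp [indicator]
  rw [← integral_indicator measurableSet_ball, hball, integral_fun_norm_addHaar, nsmul_eq_mul,
    smul_eq_mul, mul_assoc, intervalIntegral.integral_of_le hR, integral_Ioc_eq_integral_Ioo,
    ← Ioi_inter_Iio, ← setIntegral_indicator measurableSet_Iio]
  simp_rw [smul_eq_mul, indicator_mul_right]

/-- `H¹₀(Ω)` is represented by its dense subclass of `C¹` functions with compact support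
in `Ω`. -/
theorem wang_pointwise_estimate_j_eq_two_power (m : ℕ) (b : ℝ) (hb : 1 < b) :
    ∃ A > 0, ∀ (Ω₁ : Set (E m)), IsOpen Ω₁ → IsBounded Ω₁ →
      ∀ R : ℝ, 0 < R →
      ∀ u : E m × E 2 → ℝ,
        ContDiff ℝ 1 u → HasCompactSupport u →
        tsupport u ⊆ Ω₁ ×ˢ ball (0 : E 2) R →
        (∀ (x₁ : E m) (x₂ y₂ : E 2), ‖x₂‖ = ‖y₂‖ → u (x₁, x₂) = u (x₁, y₂)) →
        ∀ (x₁ : E m) (x₂ : E 2), (x₁, x₂) ∈ Ω₁ ×ˢ ball (0 : E 2) R → x₂ ≠ 0 →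
          |u (x₁, x₂)| ^ b ≤ b * A / ‖x₂‖ ^ ((2 : ℝ) - 1) *
            ∫ y in ball (0 : E 2) R, |u (x₁, y)| ^ (b - 1) * ‖fderiv ℝ u (x₁, y)‖ := by
  have hvol : 0 < volume.real (ball (0 : E 2) 1) :=
    ENNReal.toReal_pos (measure_ball_pos volume 0 one_pos).ne' measure_ball_lt_top.ne
  refine ⟨(2 * volume.real (ball (0 : E 2) 1))⁻¹, by positivity, ?_⟩
  intro Ω₁ _ _ R hR u hu _ hsupp hrad x₁ x₂ hx hx₂
  set e : E 2 := EuclideanSpace.single 0 1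
  have hnorm : ∀ s : ℝ, ‖s • e‖ = |s| := fun s => by simp [e, norm_smul]
  set g : ℝ → ℝ := fun s => u (x₁, s • e)
  set h : ℝ → ℝ := fun s => ‖fderiv ℝ u (x₁, s • e)‖
  have hline : ContDiff ℝ 1 fun s : ℝ => (x₁, s • e) :=
    contDiff_const.prodMk (contDiff_id.smul contDiff_const)
  have hgR : g R = 0 := image_eq_zero_of_notMem_tsupport (f := u) fun hmem =>
    (lt_irrefl R) (by simpa [hnorm, abs_of_pos hR] using (hsupp hmem).2)
  have hprofile : ∀ y : E 2, |u (x₁, y)| ^ (b - 1) * ‖fderiv ℝ u (x₁, y)‖ =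
      |g ‖y‖| ^ (b - 1) * h ‖y‖ := fun y => by
    have hy : ‖y‖ = ‖‖y‖ • e‖ := by simp [hnorm]
    rw [hrad x₁ y _ hy, norm_fderiv_eq_of_norm_eq hrad x₁ hy]
  have hux : u (x₁, x₂) = g ‖x₂‖ := hrad x₁ x₂ _ (by rw [hnorm, abs_norm])
  rw [hux, setIntegral_congr_fun measurableSet_ball fun y _ => hprofile y,
    setIntegral_ball_fun_norm_eq _ (fun s => |g s| ^ (b - 1) * h s) hR.le,
    show (2 : ℝ) - 1 = 1 by norm_num, Real.rpow_one]
  refine (abs_rpow_le_mul_intervalIntegral_div hb (hu.comp hline)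
    ((hu.continuous_fderiv one_ne_zero).comp hline.continuous).norm
    (abs_deriv_comp_smul_le (hu.differentiable one_ne_zero) x₁ (by simp [e]))
    (norm_pos_iff.2 hx₂) (by simpa using (mem_ball_zero_iff.1 hx.2).le) hgR).trans_eq ?_
  simp only [finrank_euclideanSpace_fin, Nat.cast_ofNat, Nat.add_one_sub_one, pow_one]
  field_simp
  rfl
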